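/- Let 0 < ε ≤ r, A ∈ ℝ^{n×n}, B ∈ ℝ^{n×m}, k ∈ ℝ^{m×n}, let d : [0,∞) → [−1,1] be measurable, and let (x, u) be a solution of the closed-loop system. Define the predictor state p(t) := e^{Ar} x(t) + ∫_t^{t+r} e^{A(t+r−s)} B u(s−r) ds for t ≥ 0. Then: (i) u(t) = k p(t) for all t ≥ 0; and (ii) p is locally absolutely continuous on [0,∞) and satisfies the differential equation ṗ(t) = (A + Bk) p(t) + e^{Ar} B k (p(t−r−εd(t)) − p(t−r)) for almost every t ≥ r + ε. -/

import Mathlib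

open MeasureTheory

/-- Matrix-vector multiplication between Euclidean spaces. -/
noncomputable def mv {n m : ℕ} (A : Matrix (Fin n) (Fin m) ℝ)
    (x : EuclideanSpace ℝ (Fin m)) : EuclideanSpace ℝ (Fin n) :=
  Matrix.toEuclideanLin A x

/-- `mexp A t = exp (t A)`, the matrix exponential. -/
noncomputable def mexp {n : ℕ} (A : Matrix (Fin n) (Fin n) ℝ) (t : ℝ) :
    Matrix (Fin n) (Fin n) ℝ :=
  NormedSpace.exp (t • A)

/-!
Substituting `τ = s - r`, the integral term of the predictor is
`e^{At} ∫_{t-r}^{t} e^{-Aτ} B u(τ) dτ`: the product of `e^{At}` with a sliding-window integral of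
a function continuous on a neighbourhood of `[-r, ∞)` (this is where `ε > 0` enters). Its
derivative is therefore `A (·) + B u(t) - e^{Ar} B u(t - r)`. Adding `e^{Ar}` times the integrated
plant equation, in which the input arrives as `B u(t - r - ε d(t))`, gives
`p(t) - p(0) = ∫₀ᵗ A p + B u + e^{Ar} (B u(s - r - ε d(s)) - B u(s - r)) ds`.
For `s ≥ r + ε` all three arguments of `u` are nonnegative, where the feedback law reads `u = k p`.
-/

open Set

section MatrixAction

variable {n m q : ℕ}

lemma mv_mul (M : Matrix (Fin n) (Fin m) ℝ) (N : Matrix (Fin m) (Fin q) ℝ)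
    (v : EuclideanSpace ℝ (Fin q)) : mv (M * N) v = mv M (mv N v) := by
  simp [mv, Matrix.toLpLin_apply, Matrix.mulVec_mulVec]

lemma add_mv (M N : Matrix (Fin n) (Fin m) ℝ) (v : EuclideanSpace ℝ (Fin m)) :
    mv (M + N) v = mv M v + mv N v := by
  simp [mv]

lemma one_mv (v : EuclideanSpace ℝ (Fin n)) : mv (1 : Matrix (Fin n) (Fin n) ℝ) v = v := by
  simp [mv]

lemma mv_add (M : Matrix (Fin n) (Fin m) ℝ) (v w : EuclideanSpace ℝ (Fin m)) :
    mv M (v + w) = mv M v + mv M w := map_add _ _ _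

lemma mv_sub (M : Matrix (Fin n) (Fin m) ℝ) (v w : EuclideanSpace ℝ (Fin m)) :
    mv M (v - w) = mv M v - mv M w := map_sub _ _ _

variable (n m) in
noncomputable def mvL :
    Matrix (Fin n) (Fin m) ℝ →L[ℝ] EuclideanSpace ℝ (Fin m) →L[ℝ] EuclideanSpace ℝ (Fin n) :=
  LinearMap.toContinuousLinearMap
    (Matrix.toEuclideanLin.trans LinearMap.toContinuousLinearMap).toLinearMap

@[simp]
lemma mvL_apply (M : Matrix (Fin n) (Fin m) ℝ) (v : EuclideanSpace ℝ (Fin m)) :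
    mvL n m M v = mv M v := rfl

lemma mexp_zero (A : Matrix (Fin n) (Fin n) ℝ) : mexp A 0 = 1 := by
  simp [mexp, NormedSpace.exp_zero]

lemma mexp_add (A : Matrix (Fin n) (Fin n) ℝ) (s t : ℝ) :
    mexp A (s + t) = mexp A s * mexp A t := by
  rw [mexp, add_smul]
  exact Matrix.exp_add_of_commute _ _ (((Commute.refl A).smul_left s).smul_right t)

lemma commute_mexp (A : Matrix (Fin n) (Fin n) ℝ) (t : ℝ) : Commute A (mexp A t) := by
  let _ : NormedRing (Matrix (Fin n) (Fin n) ℝ) := Matrix.linftyOpNormedRing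
  let _ : NormedAlgebra ℝ (Matrix (Fin n) (Fin n) ℝ) := Matrix.linftyOpNormedAlgebra
  exact ((Commute.refl A).smul_right t).exp_right

lemma hasDerivAt_mvL_mexp (A : Matrix (Fin n) (Fin n) ℝ) (t : ℝ) :
    HasDerivAt (fun s => mvL n n (mexp A s)) (mvL n n (A * mexp A t)) t := by
  let _ : NormedRing (Matrix (Fin n) (Fin n) ℝ) := Matrix.linftyOpNormedRing
  let _ : NormedAlgebra ℝ (Matrix (Fin n) (Fin n) ℝ) := Matrix.linftyOpNormedAlgebra
  exact (mvL n n).hasFDerivAt.comp_hasDerivAt t (hasDerivAt_exp_smul_const' A t)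

lemma continuous_mvL_mexp (A : Matrix (Fin n) (Fin n) ℝ) :
    Continuous fun s => mvL n n (mexp A s) :=
  continuous_iff_continuousAt.2 fun t => (hasDerivAt_mvL_mexp A t).continuousAt

end MatrixAction

section IntervalIntegral

variable {E : Type*} [NormedAddCommGroup E]

theorem ContinuousOn.intervalIntegrable_comp_measurable {f : ℝ → E} {c C : ℝ} (hcC : c ≤ C)
    (hf : ContinuousOn f (Icc c C)) {γ : ℝ → ℝ} (hγ : Measurable γ) {a b : ℝ}
    (hγab : MapsTo γ (uIoc a b) (Icc c C)) :
    IntervalIntegrable (fun s => f (γ s)) volume a b := by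
  have hext : Continuous fun t => f (projIcc c C hcC t) :=
    hf.comp_continuous (continuous_subtype_val.comp continuous_projIcc) fun t =>
      (projIcc c C hcC t).2
  obtain ⟨M, hM⟩ := isCompact_Icc.exists_bound_of_continuousOn hf
  rw [intervalIntegrable_iff]
  refine IntegrableOn.of_bound measure_Ioc_lt_top ?_ M ?_
  · refine (hext.comp_aestronglyMeasurable hγ.aestronglyMeasurable).congr ?_
    refine (ae_restrict_iff' measurableSet_uIoc).2 (.of_forall fun s hs => ?_)
    simp only [projIcc_of_mem hcC (hγab hs)]
  · exact (ae_restrict_iff' measurableSet_uIoc).2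
      (.of_forall fun s hs => hM _ (hγab hs))

lemma ContinuousOn.intervalIntegrable_comp_delay {f : ℝ → E} {r ε T : ℝ} {d : ℝ → ℝ}
    (hf : ContinuousOn f (Ici (-(r + ε)))) (hε : 0 ≤ ε) (hd : Measurable d)
    (hd1 : ∀ s, 0 ≤ s → d s ∈ Icc (-1 : ℝ) 1) (hT : 0 ≤ T) :
    IntervalIntegrable (fun s => f (s - r - ε * d s)) volume 0 T := by
  refine (hf.mono Icc_subset_Ici_self).intervalIntegrable_comp_measurable (C := T - r + ε)
    (by linarith) (by fun_prop) fun s hs => ?_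
  rw [uIoc_of_le hT] at hs
  have hds := hd1 s hs.1.le
  have := mul_le_mul_of_nonneg_left hds.1 hε
  have := mul_le_mul_of_nonneg_left hds.2 hε
  constructor <;> linarith [hs.1, hs.2]

variable [NormedSpace ℝ E]

lemma ContinuousLinearMap.intervalIntegrable_comp {F : Type*} [NormedAddCommGroup F]
    [NormedSpace ℝ F] (L : E →L[ℝ] F) {f : ℝ → E} {a b : ℝ}
    (hf : IntervalIntegrable f volume a b) : IntervalIntegrable (fun s => L (f s)) volume a b :=
  ⟨L.integrable_comp hf.1, L.integrable_comp hf.2⟩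

variable [CompleteSpace E]

theorem hasDerivAt_slidingIntegral {f : ℝ → E} {U : Set ℝ} {r t : ℝ} (hU : IsOpen U)
    (hf : ContinuousOn f U) (ht : uIcc (t - r) t ⊆ U) :
    HasDerivAt (fun s => ∫ τ in (s - r)..s, f τ) (f t - f (t - r)) t := by
  have hmem : ∀ s ∈ uIcc (t - r) t, U ∈ nhds s := fun s hs => hU.mem_nhds (ht hs)
  have hint := intervalIntegral.integral_hasFDerivAt ((hf.mono ht).intervalIntegrable)
    (hf.stronglyMeasurableAtFilter hU _ (ht left_mem_uIcc))
    (hf.stronglyMeasurableAtFilter hU _ (ht right_mem_uIcc))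
    (hf.continuousAt (hmem _ left_mem_uIcc)) (hf.continuousAt (hmem _ right_mem_uIcc))
  have hpath : HasDerivAt (fun s : ℝ => (s - r, s)) (1, 1) t :=
    ((hasDerivAt_id t).sub_const r).prodMk (hasDerivAt_id t)
  simpa [Function.comp_def] using hint.comp_hasDerivAt (f := fun s : ℝ => (s - r, s)) t hpath

end IntervalIntegral

section Predictor

variable {n : ℕ} (A : Matrix (Fin n) (Fin n) ℝ) (r : ℝ)

noncomputable def predictor (x w : ℝ → EuclideanSpace ℝ (Fin n)) (t : ℝ) :
    EuclideanSpace ℝ (Fin n) :=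
  mv (mexp A r) (x t) + ∫ s in t..(t + r), mv (mexp A (t + r - s)) (w (s - r))

noncomputable def inputWindow (w : ℝ → EuclideanSpace ℝ (Fin n)) (t : ℝ) :
    EuclideanSpace ℝ (Fin n) :=
  mv (mexp A t) (∫ τ in (t - r)..t, mv (mexp A (-τ)) (w τ))

variable {A r}

lemma mv_mexp_mv_mexp (s t : ℝ) (v : EuclideanSpace ℝ (Fin n)) :
    mv (mexp A s) (mv (mexp A t) v) = mv (mexp A (s + t)) v := by
  rw [mexp_add, mv_mul]

lemma integral_predictor_eq_inputWindow {w : ℝ → EuclideanSpace ℝ (Fin n)} {t : ℝ}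
    (hw : IntervalIntegrable (fun τ => mv (mexp A (-τ)) (w τ)) volume (t - r) t) :
    ∫ s in t..(t + r), mv (mexp A (t + r - s)) (w (s - r)) = inputWindow A r w t := by
  have hkernel : ∀ s, mv (mexp A (t + r - s)) (w (s - r)) =
      mvL n n (mexp A t) (mv (mexp A (-(s - r))) (w (s - r))) := fun s => by
    rw [mvL_apply, mv_mexp_mv_mexp, show t + -(s - r) = t + r - s by ring]
  simp_rw [hkernel]
  rw [intervalIntegral.integral_comp_sub_right
      (fun τ => mvL n n (mexp A t) (mv (mexp A (-τ)) (w τ))),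
    add_sub_cancel_right, (mvL n n (mexp A t)).intervalIntegral_comp_comm hw, mvL_apply,
    inputWindow]

lemma hasDerivAt_inputWindow {w : ℝ → EuclideanSpace ℝ (Fin n)} {U : Set ℝ} {t : ℝ}
    (hU : IsOpen U) (hw : ContinuousOn w U) (ht : uIcc (t - r) t ⊆ U) :
    HasDerivAt (inputWindow A r w)
      (mv A (inputWindow A r w t) + w t - mv (mexp A r) (w (t - r))) t := by
  have hkernel : ContinuousOn (fun τ => mvL n n (mexp A (-τ)) (w τ)) U :=
    ((continuous_mvL_mexp A).comp continuous_neg).continuousOn.clm_apply hw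
  refine ((hasDerivAt_mvL_mexp A t).clm_apply
    (hasDerivAt_slidingIntegral hU hkernel ht)).congr_deriv ?_
  simp only [inputWindow, mvL_apply, mv_mul, mv_sub, mv_mexp_mv_mexp, add_neg_cancel, mexp_zero,
    one_mv, neg_sub, add_sub_cancel, add_sub_assoc]

lemma uIcc_sub_subset_Ioi {c r t : ℝ} (hr : 0 ≤ r) (hc : c < -r) (ht : 0 ≤ t) :
    uIcc (t - r) t ⊆ Ioi c := by
  rw [uIcc_of_le (by linarith)]
  exact fun s hs => lt_of_lt_of_le (by linarith) hs.1

variable {x w : ℝ → EuclideanSpace ℝ (Fin n)} {c : ℝ}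

lemma predictor_eq_add_inputWindow (hr : 0 ≤ r) (hc : c < -r) (hw : ContinuousOn w (Ioi c))
    {t : ℝ} (ht : 0 ≤ t) :
    predictor A r x w t = mv (mexp A r) (x t) + inputWindow A r w t := by
  have hkernel : ContinuousOn (fun τ => mvL n n (mexp A (-τ)) (w τ)) (uIcc (t - r) t) :=
    ((continuous_mvL_mexp A).comp continuous_neg).continuousOn.clm_apply
      (hw.mono (uIcc_sub_subset_Ioi hr hc ht))
  rw [predictor, integral_predictor_eq_inputWindow hkernel.intervalIntegrable]

lemma hasDerivAt_inputWindow_of_nonneg (hr : 0 ≤ r) (hc : c < -r) (hw : ContinuousOn w (Ioi c))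
    {t : ℝ} (ht : 0 ≤ t) :
    HasDerivAt (inputWindow A r w)
      (mv A (inputWindow A r w t) + w t - mv (mexp A r) (w (t - r))) t :=
  hasDerivAt_inputWindow isOpen_Ioi hw (uIcc_sub_subset_Ioi hr hc ht)

lemma continuousOn_inputWindow (hr : 0 ≤ r) (hc : c < -r) (hw : ContinuousOn w (Ioi c)) :
    ContinuousOn (inputWindow A r w) (Ici 0) :=
  continuousOn_of_forall_continuousAt fun _ ht =>
    (hasDerivAt_inputWindow_of_nonneg hr hc hw ht).continuousAt

lemma continuousOn_predictor (hr : 0 ≤ r) (hc : c < -r) (hw : ContinuousOn w (Ioi c))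
    (hx : ContinuousOn x (Ici 0)) : ContinuousOn (predictor A r x w) (Ici 0) :=
  (((mvL n n (mexp A r)).continuous.comp_continuousOn hx).add
    (continuousOn_inputWindow hr hc hw)).congr fun _ ht => predictor_eq_add_inputWindow hr hc hw ht

lemma continuousOn_comp_sub (hc : c < -r) (hw : ContinuousOn w (Ioi c)) :
    ContinuousOn (fun s => w (s - r)) (Ici 0) :=
  hw.comp (continuous_sub_right r).continuousOn fun s (hs : 0 ≤ s) => show c < s - r by linarith

lemma intervalIntegrable_predictor_dynamics {f : ℝ → EuclideanSpace ℝ (Fin n)} {T : ℝ}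
    (hr : 0 ≤ r) (hc : c < -r) (hw : ContinuousOn w (Ioi c)) (hx : ContinuousOn x (Ici 0))
    (hf : IntervalIntegrable f volume 0 T) (hT : 0 ≤ T) :
    IntervalIntegrable
      (fun s => mv A (predictor A r x w s) + w s + mv (mexp A r) (f s - w (s - r))) volume 0 T := by
  have hsub : uIcc 0 T ⊆ Ici 0 := by rw [uIcc_of_le hT]; exact Icc_subset_Ici_self
  have hw0 : ContinuousOn w (Ici 0) := hw.mono (Ici_subset_Ioi.2 (by linarith))
  exact ((((mvL n n A).continuous.comp_continuousOn (continuousOn_predictor hr hc hw hx)).add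
    hw0).mono hsub).intervalIntegrable.add ((mvL n n (mexp A r)).intervalIntegrable_comp
      (hf.sub ((continuousOn_comp_sub hc hw).mono hsub).intervalIntegrable))

theorem predictor_eq_add_integral {f : ℝ → EuclideanSpace ℝ (Fin n)} {t : ℝ}
    (hr : 0 ≤ r) (hc : c < -r) (hw : ContinuousOn w (Ioi c)) (ht : 0 ≤ t)
    (hxc : ContinuousOn x (Icc 0 t)) (hf : IntervalIntegrable f volume 0 t)
    (hx : x t = x 0 + ∫ s in (0 : ℝ)..t, (mv A (x s) + f s)) :
    predictor A r x w t = predictor A r x w 0 +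
      ∫ s in (0 : ℝ)..t, (mv A (predictor A r x w s) + w s + mv (mexp A r) (f s - w (s - r))) := by
  have hsub : uIcc 0 t ⊆ Ici 0 := by rw [uIcc_of_le ht]; exact Icc_subset_Ici_self
  have hwin_int : IntervalIntegrable
      (fun s => mv A (inputWindow A r w s) + w s - mv (mexp A r) (w (s - r))) volume 0 t := by
    have hw0 : ContinuousOn w (Ici 0) := hw.mono (Ici_subset_Ioi.2 (by linarith))
    exact ((((mvL n n A).continuous.comp_continuousOn (continuousOn_inputWindow hr hc hw)).add
      hw0).sub ((mvL n n (mexp A r)).continuous.comp_continuousOn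
        (continuousOn_comp_sub hc hw))).mono hsub |>.intervalIntegrable
  have hplant_int : IntervalIntegrable (fun s => mv A (x s) + f s) volume 0 t :=
    (((mvL n n A).continuous.comp_continuousOn (uIcc_of_le ht ▸ hxc)).intervalIntegrable).add hf
  have hplant_pred_int :
      IntervalIntegrable (fun s => mv (mexp A r) (mv A (x s) + f s)) volume 0 t :=
    (mvL n n (mexp A r)).intervalIntegrable_comp hplant_int
  have hx_pred : mv (mexp A r) (x t) = mv (mexp A r) (x 0) +
      ∫ s in (0 : ℝ)..t, mv (mexp A r) (mv A (x s) + f s) := by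
    rw [hx, mv_add]
    exact congrArg _ ((mvL n n (mexp A r)).intervalIntegral_comp_comm hplant_int).symm
  have hwin_ftc := intervalIntegral.integral_eq_sub_of_hasDerivAt
    (fun s hs => hasDerivAt_inputWindow_of_nonneg hr hc hw (hsub hs)) hwin_int
  have hintegrand : EqOn
      (fun s => mv A (predictor A r x w s) + w s + mv (mexp A r) (f s - w (s - r)))
      (fun s => mv (mexp A r) (mv A (x s) + f s) +
        (mv A (inputWindow A r w s) + w s - mv (mexp A r) (w (s - r)))) (uIcc 0 t) := fun s hs => by
    dsimp only
    rw [predictor_eq_add_inputWindow hr hc hw (hsub hs), mv_add, mv_add, mv_sub, ← mv_mul,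
      ← mv_mul, (commute_mexp A r).eq]
    abel
  rw [intervalIntegral.integral_congr hintegrand,
    intervalIntegral.integral_add hplant_pred_int hwin_int,
    hwin_ftc, predictor_eq_add_inputWindow hr hc hw ht,
    predictor_eq_add_inputWindow hr hc hw le_rfl, hx_pred]
  abel

end Predictor

theorem stmt_7 (n m : ℕ) (A : Matrix (Fin n) (Fin n) ℝ)
    (B : Matrix (Fin n) (Fin m) ℝ) (k : Matrix (Fin m) (Fin n) ℝ)
    (r ε : ℝ) (hε : 0 < ε) (hεr : ε ≤ r)
    (d : ℝ → ℝ) (hd : Measurable d) (hd1 : ∀ t, 0 ≤ t → d t ∈ Set.Icc (-1 : ℝ) 1)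
    (x : ℝ → EuclideanSpace ℝ (Fin n)) (u : ℝ → EuclideanSpace ℝ (Fin m))
    (hxc : ContinuousOn x (Set.Ici 0))
    (huc : ContinuousOn u (Set.Ici (-(r + ε))))
    (hplant : ∀ t : ℝ, 0 ≤ t →
      x t = x 0 + ∫ s in (0 : ℝ)..t, (mv A (x s) + mv B (u (s - r - ε * d s))))
    (hfb : ∀ t : ℝ, 0 ≤ t →
      u t = mv k (mv (mexp A r) (x t)) +
        mv k (∫ s in t..(t + r), mv (mexp A (t + r - s)) (mv B (u (s - r)))))
    -- the predictor state
    (p : ℝ → EuclideanSpace ℝ (Fin n))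
    (hp : ∀ t : ℝ, 0 ≤ t →
      p t = mv (mexp A r) (x t) +
        ∫ s in t..(t + r), mv (mexp A (t + r - s)) (mv B (u (s - r)))) :
    -- (i) the feedback is `u = k p`
    (∀ t : ℝ, 0 ≤ t → u t = mv k (p t)) ∧
    -- (ii) `p` is locally absolutely continuous on `[0,∞)` and satisfies
    -- `ṗ = (A+Bk) p + exp(Ar) B k (p(t-r-εd(t)) - p(t-r))` for a.e. `t ≥ r+ε`
    (∃ g : ℝ → EuclideanSpace ℝ (Fin n),
      (∀ T : ℝ, 0 ≤ T → IntervalIntegrable g volume 0 T) ∧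
      (∀ t : ℝ, 0 ≤ t → p t = p 0 + ∫ s in (0 : ℝ)..t, g s) ∧
      (∀ᵐ s ∂(volume.restrict (Set.Ici (r + ε))),
        g s = mv (A + B * k) (p s) +
          mv (mexp A r * (B * k)) (p (s - r - ε * d s) - p (s - r)))) := by
  have hfeedback : ∀ t : ℝ, 0 ≤ t → u t = mv k (p t) := fun t ht => by
    rw [hp t ht, mv_add]
    exact hfb t ht
  refine ⟨hfeedback, ?_⟩
  set w : ℝ → EuclideanSpace ℝ (Fin n) := fun τ => mv B (u τ)
  have hr : 0 ≤ r := hε.le.trans hεr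
  have hc : -(r + ε) < -r := by linarith
  have hw : ContinuousOn w (Ici (-(r + ε))) := (mvL n m B).continuous.comp_continuousOn huc
  have hwo : ContinuousOn w (Ioi (-(r + ε))) := hw.mono Ioi_subset_Ici_self
  have hp_eq : ∀ t : ℝ, 0 ≤ t → p t = predictor A r x w t := hp
  have hdelay : ∀ T : ℝ, 0 ≤ T → IntervalIntegrable (fun s => w (s - r - ε * d s)) volume 0 T :=
    fun T hT => hw.intervalIntegrable_comp_delay hε.le hd hd1 hT
  refine ⟨fun s => mv A (predictor A r x w s) + w s +
      mv (mexp A r) (w (s - r - ε * d s) - w (s - r)),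
    fun T hT => intervalIntegrable_predictor_dynamics hr hc hwo hxc (hdelay T hT) hT,
    fun t ht => ?_, ?_⟩
  · rw [hp_eq t ht, hp_eq 0 le_rfl]
    exact predictor_eq_add_integral hr hc hwo ht (hxc.mono Icc_subset_Ici_self) (hdelay t ht)
      (hplant t ht)
  · refine (ae_restrict_iff' measurableSet_Ici).2 (.of_forall fun s (hs : r + ε ≤ s) => ?_)
    have := mul_le_mul_of_nonneg_left (hd1 s (by linarith)).2 hε.le
    simp only [w, ← hp_eq s (by linarith), add_mv, mv_mul, mv_sub, hfeedback s (by linarith),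
      hfeedback (s - r) (by linarith), hfeedback (s - r - ε * d s) (by linarith)]
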